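/- Assume there are constants 0 < b ≤ B such that b ≤ Λ*_t(y) ≤ B for every t and every y with p(y) > 0. Then for every vector v ∈ ℝ^{N·N'}, E[Σ_{t=1}^{N} ⟨η_t(y), v⟩²] ≥ ρ·‖v‖₂², where ρ = (1 − e^{−h·b})·e^{−h·B·(N'−1)}; equivalently, the matrix E[Σ_{t=1}^{N} η_t(y) ⊗ η_t(y)] − ρ·I_{N·N'} is positive semidefinite. -/

import Mathlib

open Finset
open scoped BigOperators RealInnerProductSpace

noncomputable section

/-- Real value of a Boolean: `1` if `true`, `0` if `false`. -/
def bval (b : Bool) : ℝ := if b then 1 else 0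

/-- The time window of indices `-N'+1, …, N`. -/
def window (N N' : ℕ) : Finset ℤ := Finset.Icc (-(N' : ℤ) + 1) (N : ℤ)

/-- The probability mass function of the discrete-time Bernoulli process with
true conditional intensities `Λ`. -/
def seqPMF (N N' : ℕ) (h : ℝ) (Λ : ℤ → (ℤ → Bool) → ℝ) (y : ℤ → Bool) : ℝ :=
  ∏ t ∈ window N N',
    ((1 - bval (y t)) * Real.exp (-(h * Λ t y))
      + bval (y t) * (1 - Real.exp (-(h * Λ t y))))

/-- Extension of a window-indexed binary sequence to all of `ℤ` (by `false`). -/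
def extSeq (N N' : ℕ) (w : ↥(window N N') → Bool) : ℤ → Bool :=
  fun i => if hi : i ∈ window N N' then w ⟨i, hi⟩ else false

/-- Expectation with respect to the law of the process. -/
def expect (N N' : ℕ) (h : ℝ) (Λ : ℤ → (ℤ → Bool) → ℝ) (f : (ℤ → Bool) → ℝ) : ℝ :=
  ∑ w : ↥(window N N') → Bool, seqPMF N N' h Λ (extSeq N N' w) * f (extSeq N N' w)

/-- The index set of the kernel parameter: pairs `(i, t)` with `1 ≤ t ≤ N` and
`t - N' ≤ i ≤ t - 1`. -/
def kIdx (N N' : ℕ) : Finset (ℤ × ℤ) :=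
  (Finset.Icc (-(N' : ℤ) + 1) (N : ℤ) ×ˢ Finset.Icc 1 (N : ℤ)).filter
    (fun p => p.2 - (N' : ℤ) ≤ p.1 ∧ p.1 ≤ p.2 - 1)

/-- The space `ℝ^{N·N'}` of kernel parameters, with Euclidean structure. -/
abbrev Param (N N' : ℕ) := EuclideanSpace ℝ ↥(kIdx N N')

/-- Entry `z_{i,t}` of a kernel parameter (zero outside the index set). -/
def zent (N N' : ℕ) (z : Param N N') (i t : ℤ) : ℝ :=
  if hm : (i, t) ∈ kIdx N N' then z ⟨(i, t), hm⟩ else 0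

/-- The model intensity `Λ_t(z; y) = μ + ∑_{i = t-N'}^{t-1} y_i z_{i,t}`. -/
def modelIntensity (N N' : ℕ) (μ : ℝ) (z : Param N N') (t : ℤ) (y : ℤ → Bool) : ℝ :=
  μ + ∑ i ∈ Finset.Icc (t - (N' : ℤ)) (t - 1), bval (y i) * zent N N' z i t

/-- The history vector `η_t(y)`: entry `y_i` at index `(i, t)`, zero elsewhere. -/
def eta (N N' : ℕ) (t : ℤ) (y : ℤ → Bool) : Param N N' :=
  WithLp.toLp 2 (fun p => if p.1.2 = t then bval (y p.1.1) else 0)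

/-- The link function `φ(x) = 1 - e^{-x}`. -/
def phi (x : ℝ) : ℝ := 1 - Real.exp (-x)

/-- The per-trajectory VI vector field
`Ĝ(z; y) = ∑_{t=1}^N (φ(h Λ_t(z;y)) - y_t) η_t(y)`. -/
def Ghat (N N' : ℕ) (h μ : ℝ) (z : Param N N') (y : ℤ → Bool) : Param N N' :=
  ∑ t ∈ Finset.Icc (1 : ℤ) (N : ℤ),
    (phi (h * modelIntensity N N' μ z t y) - bval (y t)) • eta N N' t y

/-- Expectation of a vector-valued statistic with respect to the law of the process. -/
def expectVec {E : Type*} [AddCommMonoid E] [Module ℝ E]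
    (N N' : ℕ) (h : ℝ) (Λ : ℤ → (ℤ → Bool) → ℝ) (f : (ℤ → Bool) → E) : E :=
  ∑ w : ↥(window N N') → Bool, seqPMF N N' h Λ (extSeq N N' w) • f (extSeq N N' w)


/-!
Fix `t` and `i` in the history window `t - N' ≤ i ≤ t - 1`, and call `E(i, t)` the event that in
this window the only event is at `i`. On `E(i, t)` we have `⟨η_t(y), v⟩ = v_{i,t}`, and the
`E(i, t)` for fixed `t` are disjoint, so `⟨η_t(y), v⟩² ≥ ∑_i 1_{E(i,t)} v_{i,t}²`. Revealing the
coordinates of `y` in time order, the conditional probability of the required value is at least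
`1 - e^{-hb}` at `i`, at least `e^{-hB}` elsewhere in the window and `1` outside it, so
`P(E(i, t)) ≥ ρ`; summing over `(i, t)` gives `ρ ‖v‖²`. The bounds on `Λ` are only assumed on the
support of `p`, but since `Λ_t` sees only the past, induction in time shows that every path has
positive probability.
-/

open Function

section Flip

variable {ι : Type*} [Fintype ι]

theorem mul_sum_le_two_mul_sum_mul_of_le_add_update [DecidableEq ι] (a : ι)
    (G f : (ι → Bool) → ℝ) (c : ℝ) (hG : ∀ w, 0 ≤ G w) (hGa : ∀ w x, G (update w a x) = G w)
    (hf : ∀ w, c ≤ f w + f (update w a (!w a))) :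
    c * ∑ w, G w ≤ 2 * ∑ w, G w * f w := by
  let flip : Equiv.Perm (ι → Bool) := Involutive.toPerm (fun w => update w a (!w a)) fun w => by
    ext j; by_cases hj : j = a <;> simp [hj]
  have hswap : ∑ w, G w * f w = ∑ w, G w * f (flip w) := by
    rw [← Equiv.sum_comp flip]
    exact sum_congr rfl fun w _ => by rw [show flip w = update w a (!w a) from rfl, hGa]
  calc c * ∑ w, G w = ∑ w, G w * c := by rw [mul_sum]; simp only [mul_comm]
    _ ≤ ∑ w, G w * (f w + f (flip w)) :=
        sum_le_sum fun w _ => mul_le_mul_of_nonneg_left (hf w) (hG w)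
    _ = 2 * ∑ w, G w * f w := by
        rw [two_mul]; nth_rw 2 [hswap]; rw [← sum_add_distrib]; simp only [mul_add]

/-- Sequential conditioning: `F s w` plays the role of the conditional weight of `w s` given the
earlier coordinates, and `c s` bounds the total weight of both values of `w s` from below. -/
theorem prod_le_sum_prod_of_le_add_update [LinearOrder ι] [DecidableEq ι]
    (F : ι → (ι → Bool) → ℝ) (c : ι → ℝ)
    (hc : ∀ s, 0 ≤ c s) (hF : ∀ s w, 0 ≤ F s w)
    (hcausal : ∀ s w w', (∀ j ≤ s, w j = w' j) → F s w = F s w')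
    (hflip : ∀ s w, c s ≤ F s w + F s (update w s (!w s))) :
    ∏ s, c s ≤ ∑ w, ∏ s, F s w := by
  -- The coordinates outside `S` are summed over freely, each contributing a factor `2`.
  have key : ∀ S : Finset ι,
      (∏ s ∈ S, c s) * 2 ^ Fintype.card ι ≤ 2 ^ #S * ∑ w, ∏ s ∈ S, F s w := by
    intro S
    induction S using Finset.induction_on_max with
    | empty => simp
    | insert a S hlt ih =>
      have ha : a ∉ S := fun h => lt_irrefl a (hlt a h)
      have hGa : ∀ w x, ∏ s ∈ S, F s (update w a x) = ∏ s ∈ S, F s w := fun w x =>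
        prod_congr rfl fun s hs => hcausal s _ _ fun j hj =>
          update_of_ne (lt_of_le_of_lt hj (hlt s hs)).ne _ _
      calc (∏ s ∈ insert a S, c s) * 2 ^ Fintype.card ι
          = c a * ((∏ s ∈ S, c s) * 2 ^ Fintype.card ι) := by rw [prod_insert ha, mul_assoc]
        _ ≤ c a * (2 ^ #S * ∑ w, ∏ s ∈ S, F s w) := mul_le_mul_of_nonneg_left ih (hc a)
        _ = 2 ^ #S * (c a * ∑ w, ∏ s ∈ S, F s w) := by ring
        _ ≤ 2 ^ #S * (2 * ∑ w, (∏ s ∈ S, F s w) * F a w) :=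
            mul_le_mul_of_nonneg_left (mul_sum_le_two_mul_sum_mul_of_le_add_update a _ _ _
              (fun w => prod_nonneg fun s _ => hF s w) hGa (hflip a)) (by positivity)
        _ = 2 ^ #(insert a S) * ∑ w, ∏ s ∈ insert a S, F s w := by
            simp only [card_insert_of_notMem ha, prod_insert ha, pow_succ, mul_sum]
            refine sum_congr rfl fun w _ => by ring
  have := key univ
  rw [card_univ] at this
  exact le_of_mul_le_mul_left (by linarith) (by positivity : (0 : ℝ) < 2 ^ Fintype.card ι)

end Flip

theorem prod_ite_eq_ite_mem {α : Type*} [DecidableEq α] {W S : Finset α} (hWS : W ⊆ S) {i : α}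
    (hi : i ∈ W) (a e : ℝ) :
    ∏ s ∈ S, (if s = i then a else if s ∈ W then e else 1) = a * e ^ (#W - 1) := by
  rw [← prod_subset hWS fun s _ hs => by
      rw [if_neg fun (hsi : s = i) => hs (hsi ▸ hi), if_neg hs],
    ← mul_prod_erase W _ hi, if_pos rfl,
    prod_congr rfl fun s hs => by rw [if_neg (ne_of_mem_erase hs), if_pos (mem_of_mem_erase hs)],
    prod_const, card_erase_of_mem hi]

theorem sum_sole_mul_sq_le_sq {α : Type*} [DecidableEq α] (W : Finset α) (y : α → Bool)
    (z : α → ℝ) :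
    ∑ i ∈ W, (∏ j ∈ W, if y j = decide (j = i) then 1 else 0) * z i ^ 2
      ≤ (∑ i ∈ W, bval (y i) * z i) ^ 2 := by
  simp_rw [prod_boole]
  by_cases hex : ∃ i₀ ∈ W, ∀ j ∈ W, y j = decide (j = i₀)
  · obtain ⟨i₀, hi₀, hy⟩ := hex
    have hsole : ∀ i, (∀ j ∈ W, y j = decide (j = i)) → i = i₀ := fun i hyi => by
      simpa [hy i₀ hi₀, eq_comm] using hyi i₀ hi₀
    have hlhs : ∑ i ∈ W, (if ∀ j ∈ W, y j = decide (j = i) then 1 else 0) * z i ^ 2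
        = z i₀ ^ 2 := by
      rw [sum_eq_single_of_mem i₀ hi₀ fun i _ hne => by rw [if_neg (mt (hsole i) hne),
        zero_mul], if_pos hy, one_mul]
    have hrhs : ∑ i ∈ W, bval (y i) * z i = z i₀ := by
      rw [sum_eq_single_of_mem i₀ hi₀ fun i hi hne => by simp [hy i hi, hne, bval]]
      simp [hy i₀ hi₀, bval]
    rw [hlhs, hrhs]
  · push Not at hex
    rw [sum_eq_zero fun i hi => by rw [if_neg (by simpa using hex i hi), zero_mul]]
    positivity

def IsCausal (N N' : ℕ) (Λ : ℤ → (ℤ → Bool) → ℝ) : Prop :=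
  ∀ (t : ℤ) (y y' : ℤ → Bool), (∀ i ∈ window N N', i < t → y i = y' i) → Λ t y = Λ t y'

def BoundedOnSupport (N N' : ℕ) (h : ℝ) (Λ : ℤ → (ℤ → Bool) → ℝ) (b B : ℝ) : Prop :=
  ∀ t ∈ window N N', ∀ y : ℤ → Bool, 0 < seqPMF N N' h Λ y → b ≤ Λ t y ∧ Λ t y ≤ B

def condProb (h : ℝ) (Λ : ℤ → (ℤ → Bool) → ℝ) (t : ℤ) (y : ℤ → Bool) : ℝ :=
  (1 - bval (y t)) * Real.exp (-(h * Λ t y)) + bval (y t) * (1 - Real.exp (-(h * Λ t y)))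

-- `∏ s, soleWeight N' i t s (y s)` is the indicator of `E(i, t)`.
def soleWeight (N' : ℕ) (i t s : ℤ) (x : Bool) : ℝ :=
  if s ∈ Icc (t - N') (t - 1) then (if x = decide (s = i) then 1 else 0) else 1

-- A lower bound for the conditional probability that `y s` takes the value required by `E(i, t)`.
def soleBound (h b B : ℝ) (N' : ℕ) (i t s : ℤ) : ℝ :=
  if s = i then 1 - Real.exp (-(h * b))
  else if s ∈ Icc (t - N') (t - 1) then Real.exp (-(h * B)) else 1

section Intensity

variable {N N' : ℕ} {h : ℝ} {Λ : ℤ → (ℤ → Bool) → ℝ} {b B : ℝ}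

theorem history_subset_window {t : ℤ} (ht : t ∈ Icc 1 (N : ℤ)) :
    Icc (t - N') (t - 1) ⊆ window N N' := fun j hj => by
  simp only [window, mem_Icc] at ht hj ⊢
  omega

theorem seqPMF_eq_prod_condProb (y : ℤ → Bool) :
    seqPMF N N' h Λ y = ∏ t ∈ window N N', condProb h Λ t y := rfl

theorem condProb_pos {t : ℤ} {y : ℤ → Bool} (hh : 0 < h) (hΛ : y t = true → 0 < Λ t y) :
    0 < condProb h Λ t y := by
  cases hyt : y t
  · simp [condProb, bval, hyt, Real.exp_pos]
  · have hexp : Real.exp (-(h * Λ t y)) < 1 :=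
      Real.exp_lt_one_iff.2 (neg_neg_of_pos (mul_pos hh (hΛ hyt)))
    simpa [condProb, bval, hyt] using hexp

@[simp]
theorem extSeq_coe (w : window N N' → Bool) (j : window N N') : extSeq N N' w j = w j := by
  simp [extSeq]

theorem IsCausal.intensity_extSeq_congr (hΛ : IsCausal N N' Λ) {s : window N N'}
    {w w' : window N N' → Bool} (hww' : ∀ j < s, w j = w' j) :
    Λ s (extSeq N N' w) = Λ s (extSeq N N' w') :=
  hΛ _ _ _ fun i hi his => by simpa [extSeq, hi] using hww' ⟨i, hi⟩ his

theorem IsCausal.condProb_extSeq_congr (hΛ : IsCausal N N' Λ) {s : window N N'}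
    {w w' : window N N' → Bool} (hww' : ∀ j ≤ s, w j = w' j) :
    condProb h Λ s (extSeq N N' w) = condProb h Λ s (extSeq N N' w') := by
  rw [condProb, condProb, hΛ.intensity_extSeq_congr fun j hj => hww' j hj.le, extSeq_coe,
    extSeq_coe, hww' s le_rfl]

/-- An event at `s` has positive probability because `Λ s` only sees the past, so it may be
evaluated on the path truncated at `s`, which has positive probability by induction. -/
theorem condProb_extSeq_pos (hh : 0 < h) (hb : 0 < b) (hΛ : IsCausal N N' Λ)
    (hbd : BoundedOnSupport N N' h Λ b B) (s : window N N') (w : window N N' → Bool) :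
    0 < condProb h Λ s (extSeq N N' w) := by
  induction s using WellFoundedLT.induction generalizing w with
  | _ s ih =>
    refine condProb_pos hh fun _ => ?_
    set w' : window N N' → Bool := fun j => if j < s then w j else false
    have hpos : 0 < seqPMF N N' h Λ (extSeq N N' w') := by
      refine prod_pos fun j hj => ?_
      by_cases hjs : j < s
      · exact ih ⟨j, hj⟩ hjs w'
      · have hjs' : ¬(⟨j, hj⟩ : window N N') < s := hjs
        have hfalse : extSeq N N' w' j = false := by simp [extSeq, hj, w', hjs']
        simp [bval, hfalse, Real.exp_pos]
    rw [hΛ.intensity_extSeq_congr (w' := w') fun j hj => by simp [w', hj]]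
    exact hb.trans_le (hbd s s.2 _ hpos).1

theorem seqPMF_extSeq_pos (hh : 0 < h) (hb : 0 < b) (hΛ : IsCausal N N' Λ)
    (hbd : BoundedOnSupport N N' h Λ b B) (w : window N N' → Bool) :
    0 < seqPMF N N' h Λ (extSeq N N' w) :=
  prod_pos fun s hs => condProb_extSeq_pos hh hb hΛ hbd ⟨s, hs⟩ w

theorem intensity_extSeq_mem_Icc (hh : 0 < h) (hb : 0 < b) (hΛ : IsCausal N N' Λ)
    (hbd : BoundedOnSupport N N' h Λ b B) {t : ℤ} (ht : t ∈ window N N')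
    (w : window N N' → Bool) : Λ t (extSeq N N' w) ∈ Set.Icc b B :=
  hbd t ht _ (seqPMF_extSeq_pos hh hb hΛ hbd w)

theorem expect_mono {f g : (ℤ → Bool) → ℝ} (hp : ∀ w, 0 ≤ seqPMF N N' h Λ (extSeq N N' w))
    (hfg : ∀ y, f y ≤ g y) : expect N N' h Λ f ≤ expect N N' h Λ g :=
  sum_le_sum fun w _ => mul_le_mul_of_nonneg_left (hfg _) (hp w)

theorem expect_sum {α : Type*} (s : Finset α) (f : α → (ℤ → Bool) → ℝ) :
    expect N N' h Λ (fun y => ∑ a ∈ s, f a y) = ∑ a ∈ s, expect N N' h Λ (f a) := by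
  simp only [_root_.expect, mul_sum]
  exact sum_comm

theorem expect_mul_const (f : (ℤ → Bool) → ℝ) (c : ℝ) :
    expect N N' h Λ (fun y => f y * c) = expect N N' h Λ f * c := by
  simp only [_root_.expect, sum_mul, mul_assoc]

theorem condProb_mul_add_update (hΛ : IsCausal N N' Λ) (g : Bool → ℝ) (s : window N N')
    (w : window N N' → Bool) :
    condProb h Λ s (extSeq N N' w) * g (w s)
        + condProb h Λ s (extSeq N N' (update w s (!w s))) * g (update w s (!w s) s)
      = (1 - Real.exp (-(h * Λ s (extSeq N N' w)))) * g true
        + Real.exp (-(h * Λ s (extSeq N N' w))) * g false := by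
  have hΛs : ∀ x, Λ s (extSeq N N' (update w s x)) = Λ s (extSeq N N' w) := fun _ =>
    hΛ.intensity_extSeq_congr fun j hj => update_of_ne hj.ne _ _
  cases hws : w s <;> simp [condProb, bval, hws, hΛs]; ring

theorem prod_soleBound {i t : ℤ} (ht : t ∈ Icc 1 (N : ℤ)) (hi : i ∈ Icc (t - N') (t - 1)) :
    ∏ s ∈ window N N', soleBound h b B N' i t s
      = (1 - Real.exp (-(h * b))) * Real.exp (-(h * B * ((N' : ℝ) - 1))) := by
  have hN' : 1 ≤ N' := by simp only [mem_Icc] at hi; omega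
  unfold soleBound
  rw [prod_ite_eq_ite_mem (history_subset_window ht) hi, Int.card_Icc, ← Real.exp_nat_mul]
  congr 2
  push_cast [show (t - 1 + 1 - (t - N')).toNat = N' by omega, Nat.cast_sub hN']
  ring

theorem prod_condProb_mul_soleWeight {i t : ℤ} (ht : t ∈ Icc 1 (N : ℤ))
    (w : window N N' → Bool) :
    ∏ s : window N N', condProb h Λ s (extSeq N N' w) * soleWeight N' i t s (w s)
      = seqPMF N N' h Λ (extSeq N N' w)
        * ∏ j ∈ Icc (t - N') (t - 1), if extSeq N N' w j = decide (j = i) then 1 else 0 := by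
  simp_rw [prod_mul_distrib, ← extSeq_coe w]
  rw [prod_coe_sort (window N N') fun s => condProb h Λ s (extSeq N N' w),
    prod_coe_sort (window N N') fun s => soleWeight N' i t s (extSeq N N' w s),
    seqPMF_eq_prod_condProb]
  simp only [soleWeight]
  rw [prod_ite_mem, inter_eq_right.2 (history_subset_window ht)]

theorem soleBound_le_condProb_mul_add_update (hh : 0 < h) (hb : 0 < b) (hΛ : IsCausal N N' Λ)
    (hbd : BoundedOnSupport N N' h Λ b B) {i t : ℤ} (hi : i ∈ Icc (t - N') (t - 1))
    (s : window N N') (w : window N N' → Bool) :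
    soleBound h b B N' i t s
      ≤ condProb h Λ s (extSeq N N' w) * soleWeight N' i t s (w s)
        + condProb h Λ s (extSeq N N' (update w s (!w s)))
          * soleWeight N' i t s (update w s (!w s) s) := by
  rw [condProb_mul_add_update hΛ]
  obtain ⟨hlo, hhi⟩ := intensity_extSeq_mem_Icc hh hb hΛ hbd s.2 w
  have hqb : Real.exp (-(h * Λ s (extSeq N N' w))) ≤ Real.exp (-(h * b)) :=
    Real.exp_le_exp.2 (by nlinarith)
  have hqB : Real.exp (-(h * B)) ≤ Real.exp (-(h * Λ s (extSeq N N' w))) :=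
    Real.exp_le_exp.2 (by nlinarith)
  generalize Real.exp (-(h * Λ s (extSeq N N' w))) = q at hqb hqB
  by_cases hsi : (s : ℤ) = i
  · simp [soleBound, soleWeight, hsi, hi]; linarith
  by_cases hsW : (s : ℤ) ∈ Icc (t - N') (t - 1)
  · simp [soleBound, soleWeight, hsi, hsW]; linarith
  · simp [soleBound, soleWeight, hsi, hsW]

theorem le_expect_soleEvent (hh : 0 < h) (hb : 0 < b) (hΛ : IsCausal N N' Λ)
    (hbd : BoundedOnSupport N N' h Λ b B) {i t : ℤ} (ht : t ∈ Icc 1 (N : ℤ))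
    (hi : i ∈ Icc (t - N') (t - 1)) :
    (1 - Real.exp (-(h * b))) * Real.exp (-(h * B * ((N' : ℝ) - 1)))
      ≤ expect N N' h Λ
          (fun y => ∏ j ∈ Icc (t - N') (t - 1), if y j = decide (j = i) then 1 else 0) := by
  have hexp : Real.exp (-(h * b)) ≤ 1 := Real.exp_le_one_iff.2 (by nlinarith)
  rw [← prod_soleBound ht hi, ← prod_coe_sort, _root_.expect]
  simp_rw [← prod_condProb_mul_soleWeight ht]
  refine prod_le_sum_prod_of_le_add_update _ _ (fun s => ?_) (fun s w => ?_)
    (fun s w w' hww' => ?_) (soleBound_le_condProb_mul_add_update hh hb hΛ hbd hi)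
  · unfold soleBound
    split_ifs
    exacts [sub_nonneg.2 hexp, (Real.exp_pos _).le, zero_le_one]
  · refine mul_nonneg (condProb_extSeq_pos hh hb hΛ hbd s w).le ?_
    unfold soleWeight
    split_ifs <;> norm_num
  · rw [hΛ.condProb_extSeq_congr hww', hww' s le_rfl]

end Intensity

section Param

variable {N N' : ℕ}

theorem sum_kIdx (f : ℤ × ℤ → ℝ) :
    ∑ p : kIdx N N', f p = ∑ t ∈ Icc 1 (N : ℤ), ∑ i ∈ Icc (t - N') (t - 1), f (i, t) := by
  rw [sum_coe_sort]
  refine sum_finset_product_right _ _ _ fun p => ?_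
  simp only [kIdx, mem_filter, mem_product, mem_Icc]
  omega

theorem zent_coe (v : Param N N') (p : kIdx N N') : zent N N' v p.1.1 p.1.2 = v p := by
  simp [zent]

theorem norm_sq_eq_sum_zent (v : Param N N') :
    ‖v‖ ^ 2 = ∑ t ∈ Icc 1 (N : ℤ), ∑ i ∈ Icc (t - N') (t - 1), zent N N' v i t ^ 2 := by
  rw [EuclideanSpace.real_norm_sq_eq, ← sum_kIdx (fun p => zent N N' v p.1 p.2 ^ 2)]
  simp only [zent_coe]

theorem inner_eta_eq_sum {t : ℤ} (ht : t ∈ Icc 1 (N : ℤ)) (y : ℤ → Bool) (v : Param N N') :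
    ⟪eta N N' t y, v⟫ = ∑ i ∈ Icc (t - N') (t - 1), bval (y i) * zent N N' v i t := by
  simp only [PiLp.inner_apply, RCLike.inner_apply, conj_trivial, ← zent_coe v, eta]
  rw [sum_kIdx fun q => zent N N' v q.1 q.2 * if q.2 = t then bval (y q.1) else 0]
  simp only [mul_ite, mul_zero, sum_ite_irrel, sum_const_zero, sum_ite_eq', if_pos ht, mul_comm]

end Param

theorem eta_eta_positive_general
    (N N' : ℕ) (h : ℝ) (hh : 0 < h)
    (Λ : ℤ → (ℤ → Bool) → ℝ)
    (hdep : ∀ (t : ℤ) (y y' : ℤ → Bool),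
      (∀ i ∈ window N N', i < t → y i = y' i) → Λ t y = Λ t y')
    (b B : ℝ) (hb : 0 < b)
    (hstar : ∀ t ∈ window N N', ∀ y : ℤ → Bool,
      0 < seqPMF N N' h Λ y → b ≤ Λ t y ∧ Λ t y ≤ B) :
    ∀ v : Param N N',
      expect N N' h Λ (fun y => ∑ t ∈ Finset.Icc (1 : ℤ) (N : ℤ), ⟪eta N N' t y, v⟫ ^ 2)
        ≥ ((1 - Real.exp (-(h * b))) * Real.exp (-(h * B * ((N' : ℝ) - 1)))) * ‖v‖ ^ 2 := by
  intro v
  set ρ := (1 - Real.exp (-(h * b))) * Real.exp (-(h * B * ((N' : ℝ) - 1)))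
  calc ρ * ‖v‖ ^ 2
      = ∑ t ∈ Icc 1 (N : ℤ), ∑ i ∈ Icc (t - N') (t - 1), ρ * zent N N' v i t ^ 2 := by
        simp only [norm_sq_eq_sum_zent, mul_sum]
    _ ≤ ∑ t ∈ Icc 1 (N : ℤ), ∑ i ∈ Icc (t - N') (t - 1),
          expect N N' h Λ (fun y => ∏ j ∈ Icc (t - N') (t - 1),
            if y j = decide (j = i) then 1 else 0) * zent N N' v i t ^ 2 :=
        sum_le_sum fun t ht => sum_le_sum fun i hi => mul_le_mul_of_nonneg_right
          (le_expect_soleEvent hh hb hdep hstar ht hi) (sq_nonneg _)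
    _ = expect N N' h Λ (fun y => ∑ t ∈ Icc 1 (N : ℤ), ∑ i ∈ Icc (t - N') (t - 1),
          (∏ j ∈ Icc (t - N') (t - 1), if y j = decide (j = i) then 1 else 0)
            * zent N N' v i t ^ 2) := by
        simp only [expect_sum, expect_mul_const]
    _ ≤ expect N N' h Λ (fun y => ∑ t ∈ Icc 1 (N : ℤ), ⟪eta N N' t y, v⟫ ^ 2) :=
        expect_mono (fun w => (seqPMF_extSeq_pos hh hb hdep hstar w).le) fun y =>
          sum_le_sum fun t ht => by
            rw [inner_eta_eq_sum ht]
            exact sum_sole_mul_sq_le_sq _ _ _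

/-- positive-definiteness of `E[∑_t η_t ⊗ η_t]`:
for every `v`, `E[∑_{t=1}^N ⟨η_t(y), v⟩²] ≥ ρ ‖v‖²` with
`ρ = (1 - e^{-h b}) e^{-h B (N'-1)}`. -/
theorem eta_eta_positive
    (N N' : ℕ) (hN : 1 ≤ N) (hN' : 1 ≤ N') (h : ℝ) (hh : 0 < h)
    (Λ : ℤ → (ℤ → Bool) → ℝ)
    (hdep : ∀ (t : ℤ) (y y' : ℤ → Bool),
      (∀ i ∈ window N N', i < t → y i = y' i) → Λ t y = Λ t y')
    (b B : ℝ) (hb : 0 < b) (hbB : b ≤ B)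
    (hstar : ∀ t ∈ window N N', ∀ y : ℤ → Bool,
      0 < seqPMF N N' h Λ y → b ≤ Λ t y ∧ Λ t y ≤ B) :
    ∀ v : Param N N',
      expect N N' h Λ (fun y => ∑ t ∈ Finset.Icc (1 : ℤ) (N : ℤ), ⟪eta N N' t y, v⟫ ^ 2)
        ≥ ((1 - Real.exp (-(h * b))) * Real.exp (-(h * B * ((N' : ℝ) - 1)))) * ‖v‖ ^ 2 :=
  eta_eta_positive_general N N' h hh Λ hdep b B hb hstar
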